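/- If U ⊆ J is a uniformly random subset of the jobs (each job is included in U independently with probability 1/2), then E[t_{LP1(U,1/2)}] ≥ (1/2) · t_{LP1(J,1/2)}. -/

import Mathlib

open MeasureTheory ENNReal

/-- An SUU instance: failure probabilities `q i j ∈ [0,1]` for machine `i` and job `j`,
with every job having some machine with `q i j < 1`. -/
structure SUU (J M : Type) where
  q : M → J → ℝ
  q_nonneg : ∀ i j, 0 ≤ q i j
  q_le_one : ∀ i j, q i j ≤ 1
  exists_lt_one : ∀ j, ∃ i, q i j < 1

/-- A schedule maps the history of surviving-job sets (most recent first)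
to an assignment of a set of machines to each job. -/
abbrev Schedule (J M : Type) := List (Finset J) → J → Finset M

namespace SUU

variable {J M : Type} [Fintype J] [Fintype M]

/-- The log failure `ℓ i j = -log₂ (q i j)`, valued in `ℝ≥0∞` (with `ℓ = ∞` when `q = 0`). -/
noncomputable def ell (I : SUU J M) (i : M) (j : J) : ℝ≥0∞ :=
  if I.q i j = 0 then ⊤ else ENNReal.ofReal (-Real.logb 2 (I.q i j))


/-- The optimal value `t_{LP1(J',L)}` of the integer program LP1: minimize the maximum
machine load `t` subject to every job in `J'` receiving log mass at least `L`. -/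
noncomputable def tLP1 (I : SUU J M) (J' : Finset J) (L : ℝ) : ℕ :=
  sInf {t : ℕ | ∃ x : M → J → ℕ,
    (∀ j ∈ J', ENNReal.ofReal L ≤ ∑ i : M, I.ell i j * (x i j : ℝ≥0∞)) ∧
    (∀ i : M, ∑ j : J, x i j ≤ t)}

end SUU

private lemma exists_nat_mul_ge (a : ℝ≥0∞) (ha : a ≠ 0) (b : ℝ≥0∞) (hb : b ≠ ⊤) :
    ∃ n : ℕ, b ≤ a * n := by
  rcases eq_or_ne a ⊤ with h | h
  · exact ⟨1, by simp [h]⟩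
  · obtain ⟨n, hn⟩ := ENNReal.exists_nat_gt (show b / a ≠ ⊤ from (ENNReal.div_lt_top hb ha).ne)
    refine ⟨n, ?_⟩
    calc b = b / a * a := (ENNReal.div_mul_cancel ha h).symm
    _ ≤ n * a := by gcongr
    _ = a * n := mul_comm _ _

private lemma SUU.feas_nonempty {J M : Type} [Fintype J] [Fintype M] (I : SUU J M)
    (U : Finset J) (L : ℝ) :
    {t : ℕ | ∃ x : M → J → ℕ,
      (∀ j ∈ U, ENNReal.ofReal L ≤ ∑ i : M, I.ell i j * (x i j : ℝ≥0∞)) ∧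
      (∀ i : M, ∑ j : J, x i j ≤ t)}.Nonempty := by
  classical
  have key : ∀ j : J, ∃ (i : M) (n : ℕ), ENNReal.ofReal L ≤ I.ell i j * n := by
    intro j
    obtain ⟨i, hi⟩ := I.exists_lt_one j
    have hne : I.ell i j ≠ 0 := by
      unfold SUU.ell
      split_ifs with h
      · exact ENNReal.top_ne_zero
      · have hq : 0 < I.q i j := lt_of_le_of_ne (I.q_nonneg i j) (Ne.symm h)
        have hlog : Real.logb 2 (I.q i j) < 0 := Real.logb_neg one_lt_two hq hi
        simp only [ne_eq, ENNReal.ofReal_eq_zero, not_le]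
        linarith
    obtain ⟨n, hn⟩ := exists_nat_mul_ge (I.ell i j) hne (ENNReal.ofReal L) ENNReal.ofReal_ne_top
    exact ⟨i, n, hn⟩
  choose c n hcn using key
  refine ⟨∑ j : J, n j, fun i j => if i = c j then n j else 0, fun j _ => ?_, fun i => ?_⟩
  · calc ENNReal.ofReal L ≤ I.ell (c j) j * (n j : ℝ≥0∞) := hcn j
    _ = I.ell (c j) j * (((if c j = c j then n j else 0 : ℕ) : ℝ≥0∞)) := by simp
    _ ≤ ∑ i : M, I.ell i j * (((if i = c j then n j else 0 : ℕ) : ℝ≥0∞)) :=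
        Finset.single_le_sum
          (f := fun i => I.ell i j * (((if i = c j then n j else 0 : ℕ) : ℝ≥0∞)))
          (fun _ _ => zero_le) (Finset.mem_univ _)
  · exact Finset.sum_le_sum fun j _ => by dsimp only; split <;> simp

private lemma SUU.tLP1_superadd {J M : Type} [Fintype J] [Fintype M] [DecidableEq J]
    (I : SUU J M) (U : Finset J) (L : ℝ) :
    I.tLP1 Finset.univ L ≤ I.tLP1 U L + I.tLP1 (Finset.univ \ U) L := by
  classical
  obtain ⟨x, hx1, hx2⟩ : ∃ x : M → J → ℕ,
      (∀ j ∈ U, ENNReal.ofReal L ≤ ∑ i : M, I.ell i j * (x i j : ℝ≥0∞)) ∧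
      (∀ i : M, ∑ j : J, x i j ≤ I.tLP1 U L) := Nat.sInf_mem (I.feas_nonempty U L)
  obtain ⟨y, hy1, hy2⟩ : ∃ y : M → J → ℕ,
      (∀ j ∈ Finset.univ \ U, ENNReal.ofReal L ≤ ∑ i : M, I.ell i j * (y i j : ℝ≥0∞)) ∧
      (∀ i : M, ∑ j : J, y i j ≤ I.tLP1 (Finset.univ \ U) L) :=
    Nat.sInf_mem (I.feas_nonempty (Finset.univ \ U) L)
  apply Nat.sInf_le
  refine ⟨fun i j => x i j + y i j, fun j _ => ?_, fun i => ?_⟩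
  · have hsum : ∑ i : M, I.ell i j * ((x i j + y i j : ℕ) : ℝ≥0∞)
        = (∑ i : M, I.ell i j * (x i j : ℝ≥0∞)) + ∑ i : M, I.ell i j * (y i j : ℝ≥0∞) := by
      rw [← Finset.sum_add_distrib]
      refine Finset.sum_congr rfl fun i _ => ?_
      push_cast
      ring
    rw [hsum]
    by_cases hj : j ∈ U
    · exact le_trans (hx1 j hj) le_self_add
    · exact le_trans (hy1 j (by simp [hj])) le_add_self
  · calc ∑ j : J, (x i j + y i j) = (∑ j : J, x i j) + ∑ j : J, y i j :=
        Finset.sum_add_distrib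
    _ ≤ _ := add_le_add (hx2 i) (hy2 i)

/-- If `U ⊆ J` is a uniformly random subset of the jobs (each job included
independently with probability 1/2), then `E[t_{LP1(U,1/2)}] ≥ (1/2) · t_{LP1(J,1/2)}`.
The expectation is written as the average over all `2^n` subsets. -/
theorem tLP1_random_subset_lower {J M : Type} [Fintype J] [Fintype M] (I : SUU J M) :
    (I.tLP1 Finset.univ (1 / 2) : ℝ) / 2 ≤
      (∑ U ∈ (Finset.univ : Finset J).powerset, (I.tLP1 U (1 / 2) : ℝ)) /
        2 ^ Fintype.card J := by
  classical
  have hswap : ∑ U ∈ (Finset.univ : Finset J).powerset, I.tLP1 (Finset.univ \ U) (1 / 2)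
      = ∑ U ∈ (Finset.univ : Finset J).powerset, I.tLP1 U (1 / 2) := by
    apply Finset.sum_nbij' (i := fun U => Finset.univ \ U) (j := fun U => Finset.univ \ U)
    · intro U hU; simp
    · intro U hU; simp
    · intro U hU
      exact Finset.sdiff_sdiff_eq_self (Finset.mem_powerset.mp hU)
    · intro U hU
      exact Finset.sdiff_sdiff_eq_self (Finset.mem_powerset.mp hU)
    · intro U hU; rfl
  have hnat : 2 ^ Fintype.card J * I.tLP1 Finset.univ (1 / 2)
      ≤ 2 * ∑ U ∈ (Finset.univ : Finset J).powerset, I.tLP1 U (1 / 2) := by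
    calc 2 ^ Fintype.card J * I.tLP1 Finset.univ (1 / 2)
        = ∑ _U ∈ (Finset.univ : Finset J).powerset, I.tLP1 Finset.univ (1 / 2) := by
          rw [Finset.sum_const, Finset.card_powerset, Finset.card_univ, smul_eq_mul]
    _ ≤ ∑ U ∈ (Finset.univ : Finset J).powerset,
          (I.tLP1 U (1 / 2) + I.tLP1 (Finset.univ \ U) (1 / 2)) :=
        Finset.sum_le_sum fun U _ => I.tLP1_superadd U (1 / 2)
    _ = 2 * ∑ U ∈ (Finset.univ : Finset J).powerset, I.tLP1 U (1 / 2) := by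
        rw [Finset.sum_add_distrib, hswap]; ring
  rw [div_le_div_iff₀ two_pos (by positivity)]
  have hcast := (Nat.cast_le (α := ℝ)).mpr hnat
  push_cast at hcast
  linarith
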